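/- arXiv:0809.1144 — 7 statements merged into one kernel-verified Lean document; each statement's English description precedes it below -/
import Mathlib

section
/- Let (V, μ, Δ) be an infinitesimal bialgebra in the sense of Joni–Rota (θ = 0 compatibility: Δ∘μ = (μ ⊗ id)∘(id ⊗ Δ) + (id ⊗ μ)∘(Δ ⊗ id)). Define m(x, y) = Σ_{(y)} μ(μ(y_{(1)} ⊗ x) ⊗ y_{(2)}) using Sweedler notation Δ(y) = Σ y_{(1)} ⊗ y_{(2)}. Then m is a (left) preLie product: m(x, m(y,z)) − m(m(x,y), z) = m(y, m(x,z)) − m(m(y,x), z) for all x, y, z ∈ V. -/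
/-!
Compatibility says that `Δ` is a derivation into the `V`-bimodule `V ⊗ V`. Writing
`m x y = Σ (y₁ x) y₂`, expanding `Δ (m y z)` by the derivation rule and then `Δ (z₁ y)` once more
gives `m x (m y z) = m (m x y) z + T(y, x) + T(x, y)`, where `T(y, x) = Σ ((z₁ y)(z₂ x)) z₃` is
summed over the iterated coproduct of `z`; coassociativity is what makes the two terms coming
from `Δ z₁` and from `Δ z₂` the same trilinear expression. The associator of `m` is therefore
symmetric in `x, y`.
-/

open TensorProduct

namespace InfinitesimalBialgebra

variable {K V : Type*} [CommSemiring K] [AddCommMonoid V] [Module K V]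

noncomputable def mulRight (μ : V ⊗[K] V →ₗ[K] V) (x : V) : V →ₗ[K] V :=
  μ ∘ₗ (mk K V V).flip x

noncomputable def insertMul (μ : V ⊗[K] V →ₗ[K] V) (x : V) : V ⊗[K] V →ₗ[K] V :=
  μ ∘ₗ map (mulRight μ x) LinearMap.id

noncomputable def insertMul₂ (μ : V ⊗[K] V →ₗ[K] V) (x y : V) : V ⊗[K] (V ⊗[K] V) →ₗ[K] V :=
  μ ∘ₗ map (μ ∘ₗ map (mulRight μ x) (mulRight μ y)) LinearMap.id ∘ₗ
    (TensorProduct.assoc K V V V).symm.toLinearMap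

variable (μ : V ⊗[K] V →ₗ[K] V)

@[simp]
lemma mulRight_apply (x a : V) : mulRight μ x a = μ (a ⊗ₜ x) := rfl

@[simp]
lemma insertMul_tmul (x a b : V) : insertMul μ x (a ⊗ₜ b) = μ (μ (a ⊗ₜ x) ⊗ₜ b) := rfl

@[simp]
lemma insertMul₂_tmul (x y a b c : V) :
    insertMul₂ μ x y (a ⊗ₜ (b ⊗ₜ c)) = μ (μ (μ (a ⊗ₜ x) ⊗ₜ μ (b ⊗ₜ y)) ⊗ₜ c) := rfl

section Associative

variable {μ}
variable (hassoc : ∀ x y z : V, μ (μ (x ⊗ₜ[K] y) ⊗ₜ[K] z) = μ (x ⊗ₜ[K] μ (y ⊗ₜ[K] z)))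
include hassoc

lemma insertMul_mul_smul_left (x y a : V) (w : V ⊗[K] V) :
    insertMul μ x (map μ LinearMap.id
        ((TensorProduct.assoc K V V V).symm (μ (a ⊗ₜ y) ⊗ₜ w))) =
      insertMul₂ μ y x (a ⊗ₜ w) := by
  induction w using TensorProduct.induction_on with
  | zero => simp
  | tmul p q => simp [hassoc (μ (a ⊗ₜ y)) p x]
  | add w₁ w₂ h₁ h₂ => simp only [tmul_add, map_add, h₁, h₂]

lemma insertMul_smul_smul (x a b : V) (w : V ⊗[K] V) :
    insertMul μ x (map LinearMap.id μ (TensorProduct.assoc K V V V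
        (map μ LinearMap.id ((TensorProduct.assoc K V V V).symm (a ⊗ₜ w)) ⊗ₜ b))) =
      μ (μ (a ⊗ₜ insertMul μ x w) ⊗ₜ b) := by
  induction w using TensorProduct.induction_on with
  | zero => simp
  | tmul p q =>
    simp [← hassoc (μ (μ (a ⊗ₜ p) ⊗ₜ x)) q b, ← hassoc a (μ (p ⊗ₜ x)) q, ← hassoc a p x]
  | add w₁ w₂ h₁ h₂ => simp only [tmul_add, map_add, add_tmul, h₁, h₂]

lemma insertMul_smul_mul_right (x y b : V) (w : V ⊗[K] V) :
    insertMul μ x (map LinearMap.id μ (TensorProduct.assoc K V V V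
        (map LinearMap.id μ (TensorProduct.assoc K V V V (w ⊗ₜ y)) ⊗ₜ b))) =
      insertMul₂ μ x y (TensorProduct.assoc K V V V (w ⊗ₜ b)) := by
  induction w using TensorProduct.induction_on with
  | zero => simp
  | tmul p q => simp [hassoc (μ (p ⊗ₜ x)) (μ (q ⊗ₜ y)) b]
  | add w₁ w₂ h₁ h₂ => simp only [add_tmul, map_add, h₁, h₂]

variable {Δ : V →ₗ[K] V ⊗[K] V}
variable (hcompat : ∀ x y : V, Δ (μ (x ⊗ₜ[K] y)) =
      map μ LinearMap.id ((TensorProduct.assoc K V V V).symm (x ⊗ₜ[K] Δ y)) +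
        map LinearMap.id μ (TensorProduct.assoc K V V V (Δ x ⊗ₜ[K] y)))
include hcompat

lemma insertMul_comul_insertMul (x y : V) (t : V ⊗[K] V) :
    insertMul μ x (Δ (insertMul μ y t)) =
      insertMul μ (insertMul μ x (Δ y)) t + insertMul₂ μ y x (map LinearMap.id Δ t) +
        insertMul₂ μ x y (TensorProduct.assoc K V V V (map Δ LinearMap.id t)) := by
  induction t using TensorProduct.induction_on with
  | zero => simp
  | tmul a b =>
    rw [insertMul_tmul, hcompat, map_add, insertMul_mul_smul_left hassoc, hcompat a y, add_tmul]
    simp only [map_add]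
    rw [insertMul_smul_smul hassoc, insertMul_smul_mul_right hassoc]
    simp only [map_tmul, LinearMap.id_coe, id_eq, insertMul_tmul]
    abel
  | add t₁ t₂ h₁ h₂ =>
    simp only [map_add, h₁, h₂]
    abel

lemma insertMul_comul_insertMul_comul
    (hcoassoc : ∀ x : V,
      TensorProduct.assoc K V V V (map Δ LinearMap.id (Δ x)) = map LinearMap.id Δ (Δ x))
    (x y z : V) :
    insertMul μ x (Δ (insertMul μ y (Δ z))) =
      insertMul μ (insertMul μ x (Δ y)) (Δ z) + insertMul₂ μ y x (map LinearMap.id Δ (Δ z)) +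
        insertMul₂ μ x y (map LinearMap.id Δ (Δ z)) := by
  rw [insertMul_comul_insertMul hassoc hcompat, hcoassoc]

end Associative

end InfinitesimalBialgebra

open InfinitesimalBialgebra in
/-- Aguiar: any (Joni–Rota) infinitesimal bialgebra gives a preLie product
m(x,y) = Σ μ(μ(y₍₁₎ ⊗ x) ⊗ y₍₂₎). -/
theorem stmt_4 (K : Type*) [Field K] (V : Type*) [AddCommGroup V] [Module K V]
    (μ : V ⊗[K] V →ₗ[K] V)
    (hassoc : ∀ x y z : V, μ (μ (x ⊗ₜ[K] y) ⊗ₜ[K] z) = μ (x ⊗ₜ[K] μ (y ⊗ₜ[K] z)))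
    (Δ : V →ₗ[K] V ⊗[K] V)
    (hcoassoc : ∀ x : V,
      (TensorProduct.assoc K V V V) (TensorProduct.map Δ LinearMap.id (Δ x)) =
        TensorProduct.map LinearMap.id Δ (Δ x))
    (hcompat : ∀ x y : V, Δ (μ (x ⊗ₜ[K] y)) =
      TensorProduct.map μ LinearMap.id
          ((TensorProduct.assoc K V V V).symm (x ⊗ₜ[K] Δ y)) +
        TensorProduct.map LinearMap.id μ
          ((TensorProduct.assoc K V V V) (Δ x ⊗ₜ[K] y)))
    (m : V → V → V)
    (hm : ∀ x y : V, m x y =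
      μ (TensorProduct.map (μ ∘ₗ (TensorProduct.mk K V V).flip x) LinearMap.id (Δ y))) :
    ∀ x y z : V,
      m x (m y z) - m (m x y) z = m y (m x z) - m (m y x) z := by
  obtain rfl : m = fun x y => insertMul μ x (Δ y) := funext₂ hm
  intro x y z
  beta_reduce
  rw [insertMul_comul_insertMul_comul hassoc hcompat hcoassoc x y z,
    insertMul_comul_insertMul_comul hassoc hcompat hcoassoc y x z]
  abel
end

section
/- Kaplansky's first construction yields a bialgebra: with Ṽ = V ⊕ K·e₁, the multiplication μ₁ extending μ with new unit e₁, the comultiplication Δ₁ given by Δ₁(e₁) = e₁ ⊗ e₁ and Δ₁(x) = x ⊗ e₁ + e₁ ⊗ x − e₂ ⊗ x for x ∈ V, and counit ε₁ with ε₁(e₁) = 1, ε₁(x) = 0 for x ∈ V, the tuple (Ṽ, μ₁, η₁, Δ₁, ε₁) is a bialgebra (Δ₁ is coassociative, ε₁ is a counit, and Δ₁, ε₁ are algebra morphisms). -/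
/-!
Every identity to be checked is an equality of linear maps out of `Ṽ = V × K` or `Ṽ ⊗ Ṽ`, so it
suffices to test it on `e₁ = (0, 1)` and on `V`. The only identity that is not immediate is
multiplicativity of `Δ₁` on `V ⊗ V`: in `Δ₁ x * Δ₁ y` the mixed terms `± x ⊗ y` and `± y ⊗ x`
cancel because `e₂` is a two-sided unit of `μ`, and the three terms `± e₂ ⊗ xy` add up to
`- e₂ ⊗ xy` because `e₂ e₂ = e₂`.
-/

open TensorProduct

namespace Kaplansky

variable {K V : Type*} [CommRing K] [AddCommGroup V] [Module K V]

def mul (μ : V ⊗[K] V →ₗ[K] V) : (V × K) ⊗[K] (V × K) →ₗ[K] V × K :=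
  LinearMap.prod
    (μ ∘ₗ map (LinearMap.fst K V K) (LinearMap.fst K V K) +
      (TensorProduct.lid K V).toLinearMap ∘ₗ map (LinearMap.snd K V K) (LinearMap.fst K V K) +
      (TensorProduct.rid K V).toLinearMap ∘ₗ map (LinearMap.fst K V K) (LinearMap.snd K V K))
    ((TensorProduct.lid K K).toLinearMap ∘ₗ map (LinearMap.snd K V K) (LinearMap.snd K V K))

@[simp]
theorem mul_tmul (μ : V ⊗[K] V →ₗ[K] V) (v w : V) (a b : K) :
    mul μ ((v, a) ⊗ₜ (w, b)) = (μ (v ⊗ₜ w) + a • w + b • v, a * b) := by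
  simp [mul]

def comul (e₂ : V) : V × K →ₗ[K] (V × K) ⊗[K] (V × K) :=
  LinearMap.coprod
    (((mk K (V × K) (V × K)).flip (0, 1) + mk K (V × K) (V × K) (0, 1) -
      mk K (V × K) (V × K) (e₂, 0)) ∘ₗ LinearMap.inl K V K)
    (LinearMap.toSpanSingleton K _ (((0 : V), (1 : K)) ⊗ₜ ((0 : V), (1 : K))))

@[simp]
theorem comul_zero_one (e₂ : V) :
    comul e₂ ((0 : V), (1 : K)) = ((0 : V), (1 : K)) ⊗ₜ[K] ((0 : V), (1 : K)) := by
  simp [comul, Prod.mk_zero_zero]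

@[simp]
theorem comul_mk_zero (e₂ v : V) :
    comul e₂ ((v, 0) : V × K) = (v, (0 : K)) ⊗ₜ[K] ((0 : V), (1 : K)) +
        ((0 : V), (1 : K)) ⊗ₜ[K] (v, (0 : K)) - (e₂, (0 : K)) ⊗ₜ[K] (v, (0 : K)) := by
  simp [comul]

theorem comul_coassoc (e₂ : V) :
    (TensorProduct.assoc K (V × K) (V × K) (V × K)).toLinearMap ∘ₗ
        map (comul e₂) LinearMap.id ∘ₗ comul e₂ =
      map LinearMap.id (comul e₂) ∘ₗ comul e₂ := by
  ext v
  · simp only [LinearMap.coe_comp, LinearEquiv.coe_coe, LinearMap.coe_inl, Function.comp_apply,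
      comul_mk_zero, map_sub, map_add, map_tmul, LinearMap.id_coe, id_eq, sub_tmul, add_tmul,
      comul_zero_one, assoc_tmul, tmul_sub, tmul_add]
    abel
  · simp

theorem lid_comp_map_snd_id_comp_comul (e₂ : V) :
    (TensorProduct.lid K (V × K)).toLinearMap ∘ₗ map (LinearMap.snd K V K) LinearMap.id ∘ₗ
        comul e₂ = LinearMap.id := by
  ext v <;> simp

theorem rid_comp_map_id_snd_comp_comul (e₂ : V) :
    (TensorProduct.rid K (V × K)).toLinearMap ∘ₗ map LinearMap.id (LinearMap.snd K V K) ∘ₗ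
        comul e₂ = LinearMap.id := by
  ext v <;> simp

theorem comul_comp_mul (μ : V ⊗[K] V →ₗ[K] V) (e₂ : V)
    (hunitl : ∀ x : V, μ (e₂ ⊗ₜ[K] x) = x) (hunitr : ∀ x : V, μ (x ⊗ₜ[K] e₂) = x) :
    comul e₂ ∘ₗ mul μ =
      map (mul μ) (mul μ) ∘ₗ
        (tensorTensorTensorComm K (V × K) (V × K) (V × K) (V × K)).toLinearMap ∘ₗ
          map (comul e₂) (comul e₂) := by
  ext v w
  case hl.hl =>
    simp only [LinearMap.coe_comp, LinearMap.coe_inl, Function.comp_apply,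
      AlgebraTensorModule.curry_apply, LinearMap.restrictScalars_self, curry_apply, mul_tmul,
      zero_smul, add_zero, mul_zero, comul_mk_zero, LinearEquiv.coe_coe, map_tmul, tmul_sub,
      tmul_add, sub_tmul, add_tmul, map_sub, map_add, tensorTensorTensorComm_tmul, tmul_zero,
      map_zero, smul_zero, mul_one, zero_tmul, one_smul, zero_add, hunitl, add_sub_cancel_right,
      hunitr]
    abel
  all_goals simp [tmul_sub, sub_tmul, tmul_add, add_tmul]

theorem snd_mul_tmul (μ : V ⊗[K] V →ₗ[K] V) (x y : V × K) :
    (mul μ (x ⊗ₜ y)).2 = x.2 * y.2 := by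
  simp [mul]

end Kaplansky

theorem stmt_7_general (K : Type*) [Field K] (V : Type*) [AddCommGroup V] [Module K V]
    (μ : V ⊗[K] V →ₗ[K] V) (e₂ : V)
    (hunitl : ∀ x : V, μ (e₂ ⊗ₜ[K] x) = x)
    (hunitr : ∀ x : V, μ (x ⊗ₜ[K] e₂) = x)
    (μ₁ : (V × K) ⊗[K] (V × K) →ₗ[K] V × K)
    (hμ₁ : ∀ (v w : V) (a b : K),
      μ₁ ((v, a) ⊗ₜ[K] (w, b)) = (μ (v ⊗ₜ[K] w) + a • w + b • v, a * b))
    (Δ₁ : (V × K) →ₗ[K] (V × K) ⊗[K] (V × K))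
    (hΔ₁ : ∀ (v : V) (a : K), Δ₁ (v, a) =
      a • (((0 : V), (1 : K)) ⊗ₜ[K] ((0 : V), (1 : K))) +
        (v, (0 : K)) ⊗ₜ[K] ((0 : V), (1 : K)) +
        ((0 : V), (1 : K)) ⊗ₜ[K] (v, (0 : K)) -
        (e₂, (0 : K)) ⊗ₜ[K] (v, (0 : K)))
    (ε₁ : (V × K) →ₗ[K] K) (hε₁ : ∀ (v : V) (a : K), ε₁ (v, a) = a) :
    (∀ x : V × K,
      (TensorProduct.assoc K (V × K) (V × K) (V × K))
          (TensorProduct.map Δ₁ LinearMap.id (Δ₁ x)) =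
        TensorProduct.map LinearMap.id Δ₁ (Δ₁ x)) ∧
    (∀ x : V × K,
      (TensorProduct.lid K (V × K)) (TensorProduct.map ε₁ LinearMap.id (Δ₁ x)) = x) ∧
    (∀ x : V × K,
      (TensorProduct.rid K (V × K)) (TensorProduct.map LinearMap.id ε₁ (Δ₁ x)) = x) ∧
    (∀ x y : V × K, Δ₁ (μ₁ (x ⊗ₜ[K] y)) =
      TensorProduct.map μ₁ μ₁
        ((TensorProduct.tensorTensorTensorComm K (V × K) (V × K) (V × K) (V × K))
          (Δ₁ x ⊗ₜ[K] Δ₁ y))) ∧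
    (∀ x y : V × K, ε₁ (μ₁ (x ⊗ₜ[K] y)) = ε₁ x * ε₁ y) := by
  obtain rfl : μ₁ = Kaplansky.mul μ :=
    TensorProduct.ext' fun ⟨v, a⟩ ⟨w, b⟩ => by rw [hμ₁, Kaplansky.mul_tmul]
  obtain rfl : Δ₁ = Kaplansky.comul e₂ := by ext v <;> simp [hΔ₁, Prod.mk_zero_zero]
  obtain rfl : ε₁ = LinearMap.snd K V K := by ext v <;> simp [hε₁]
  exact ⟨LinearMap.congr_fun (Kaplansky.comul_coassoc e₂),
    LinearMap.congr_fun (Kaplansky.lid_comp_map_snd_id_comp_comul e₂),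
    LinearMap.congr_fun (Kaplansky.rid_comp_map_id_snd_comp_comul e₂),
    fun x y => LinearMap.congr_fun (Kaplansky.comul_comp_mul μ e₂ hunitl hunitr) (x ⊗ₜ y),
    Kaplansky.snd_mul_tmul μ⟩

/-- Kaplansky's first construction (Ṽ = V ⊕ K·e₁, μ₁, Δ₁, ε₁) is a bialgebra:
Δ₁ is coassociative, ε₁ is a counit, and Δ₁, ε₁ are algebra morphisms. -/
theorem stmt_7 (K : Type*) [Field K] (V : Type*) [AddCommGroup V] [Module K V]
    (μ : V ⊗[K] V →ₗ[K] V) (e₂ : V)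
    (hassoc : ∀ x y z : V, μ (μ (x ⊗ₜ[K] y) ⊗ₜ[K] z) = μ (x ⊗ₜ[K] μ (y ⊗ₜ[K] z)))
    (hunitl : ∀ x : V, μ (e₂ ⊗ₜ[K] x) = x)
    (hunitr : ∀ x : V, μ (x ⊗ₜ[K] e₂) = x)
    (μ₁ : (V × K) ⊗[K] (V × K) →ₗ[K] V × K)
    (hμ₁ : ∀ (v w : V) (a b : K),
      μ₁ ((v, a) ⊗ₜ[K] (w, b)) = (μ (v ⊗ₜ[K] w) + a • w + b • v, a * b))
    (Δ₁ : (V × K) →ₗ[K] (V × K) ⊗[K] (V × K))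
    (hΔ₁ : ∀ (v : V) (a : K), Δ₁ (v, a) =
      a • (((0 : V), (1 : K)) ⊗ₜ[K] ((0 : V), (1 : K))) +
        (v, (0 : K)) ⊗ₜ[K] ((0 : V), (1 : K)) +
        ((0 : V), (1 : K)) ⊗ₜ[K] (v, (0 : K)) -
        (e₂, (0 : K)) ⊗ₜ[K] (v, (0 : K)))
    (ε₁ : (V × K) →ₗ[K] K) (hε₁ : ∀ (v : V) (a : K), ε₁ (v, a) = a) :
    (∀ x : V × K,
      (TensorProduct.assoc K (V × K) (V × K) (V × K))
          (TensorProduct.map Δ₁ LinearMap.id (Δ₁ x)) =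
        TensorProduct.map LinearMap.id Δ₁ (Δ₁ x)) ∧
    (∀ x : V × K,
      (TensorProduct.lid K (V × K)) (TensorProduct.map ε₁ LinearMap.id (Δ₁ x)) = x) ∧
    (∀ x : V × K,
      (TensorProduct.rid K (V × K)) (TensorProduct.map LinearMap.id ε₁ (Δ₁ x)) = x) ∧
    (∀ x y : V × K, Δ₁ (μ₁ (x ⊗ₜ[K] y)) =
      TensorProduct.map μ₁ μ₁
        ((TensorProduct.tensorTensorTensorComm K (V × K) (V × K) (V × K) (V × K))
          (Δ₁ x ⊗ₜ[K] Δ₁ y))) ∧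
    (∀ x y : V × K, ε₁ (μ₁ (x ⊗ₜ[K] y)) = ε₁ x * ε₁ y) :=
  stmt_7_general K V μ e₂ hunitl hunitr μ₁ hμ₁ Δ₁ hΔ₁ ε₁ hε₁
end

section
/- Kaplansky's first construction yields a unital infinitesimal bialgebra: with notation as in the construction, Δ₁(μ₁(x ⊗ y)) = (x ⊗ e₁)·Δ₁(y) + Δ₁(x)·(e₁ ⊗ y) − x ⊗ y for all x, y ∈ Ṽ, where · is the componentwise product on Ṽ ⊗ Ṽ induced by μ₁. -/
open TensorProduct

/-!
Both sides of the identity are bilinear in `(x, y)`, so it suffices to compare them on `e₁` and on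
`V`. Because `e₁` is a unit for `μ₁` and `Δ₁ e₁ = e₁ ⊗ e₁`, the identity holds as soon as `x` or
`y` is `e₁`, in any unital algebra. For `v, w ∈ V` both sides reduce to
`vw ⊗ e₁ + e₁ ⊗ vw - e₂ ⊗ vw`, the cross terms `v ⊗ w` cancelling because `v e₂ = v`.
-/

namespace InfinitesimalBialgebra

variable {K A : Type*} [CommSemiring K] [AddCommGroup A] [Module K A]

def tensorMul (m : A ⊗[K] A →ₗ[K] A) : A ⊗[K] A →ₗ[K] A ⊗[K] A →ₗ[K] A ⊗[K] A :=
  TensorProduct.curry (map m m ∘ₗ (tensorTensorTensorComm K A A A A).toLinearMap)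

variable {m : A ⊗[K] A →ₗ[K] A}

@[simp]
lemma tensorMul_tmul (a b c d : A) :
    tensorMul m (a ⊗ₜ b) (c ⊗ₜ d) = m (a ⊗ₜ c) ⊗ₜ m (b ⊗ₜ d) := rfl

lemma tensorMul_apply (s t : A ⊗[K] A) :
    tensorMul m s t = map m m (tensorTensorTensorComm K A A A A (s ⊗ₜ t)) := rfl

variable {u : A}

lemma tensorMul_unit_left (hl : ∀ x, m (u ⊗ₜ x) = x) (t : A ⊗[K] A) :
    tensorMul m (u ⊗ₜ u) t = t := by
  induction t using TensorProduct.induction_on with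
  | zero => simp
  | tmul a b => simp [hl]
  | add s t hs ht => simp [hs, ht]

lemma tensorMul_unit_right (hr : ∀ x, m (x ⊗ₜ u) = x) (s : A ⊗[K] A) :
    tensorMul m s (u ⊗ₜ u) = s := by
  induction s using TensorProduct.induction_on with
  | zero => simp
  | tmul a b => simp [hr]
  | add s t hs ht => simp [hs, ht]

/-- `defect m Δ u = 0` is the compatibility `Δ(xy) = (x ⊗ u)·Δy + Δx·(u ⊗ y) - x ⊗ y`
of a unital infinitesimal bialgebra. -/
def defect (m : A ⊗[K] A →ₗ[K] A) (Δ : A →ₗ[K] A ⊗[K] A) (u : A) :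
    A →ₗ[K] A →ₗ[K] A ⊗[K] A :=
  (mk K A A).compr₂ (Δ ∘ₗ m) - (tensorMul m).compl₁₂ ((mk K A A).flip u) Δ -
    (tensorMul m).compl₁₂ Δ (mk K A A u) + mk K A A

variable {Δ : A →ₗ[K] A ⊗[K] A}

lemma defect_apply (x y : A) : defect m Δ u x y =
    Δ (m (x ⊗ₜ y)) - tensorMul m (x ⊗ₜ u) (Δ y) - tensorMul m (Δ x) (u ⊗ₜ y) + x ⊗ₜ y := rfl

lemma defect_eq_zero_iff : defect m Δ u = 0 ↔ ∀ x y, Δ (m (x ⊗ₜ y)) =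
    tensorMul m (x ⊗ₜ u) (Δ y) + tensorMul m (Δ x) (u ⊗ₜ y) - x ⊗ₜ y := by
  simp only [LinearMap.ext_iff₂, defect_apply, LinearMap.zero_apply]
  refine forall₂_congr fun x y => ?_
  rw [← sub_eq_zero (a := Δ _)]
  constructor <;> intro h <;> rw [← h] <;> abel

lemma defect_unit_left (hl : ∀ x, m (u ⊗ₜ x) = x) (hΔ : Δ u = u ⊗ₜ u) (y : A) :
    defect m Δ u u y = 0 := by
  rw [defect_apply, hΔ, tensorMul_unit_left hl, tensorMul_tmul, hl, hl]
  abel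

lemma defect_unit_right (hr : ∀ x, m (x ⊗ₜ u) = x) (hΔ : Δ u = u ⊗ₜ u) (x : A) :
    defect m Δ u x u = 0 := by
  simp only [defect_apply, hΔ, hr, tensorMul_unit_right hr]
  abel

end InfinitesimalBialgebra

namespace Kaplansky

open InfinitesimalBialgebra

variable {K V : Type*} [CommRing K] [AddCommGroup V] [Module K V] {μ : V ⊗[K] V →ₗ[K] V}
  {μ₁ : (V × K) ⊗[K] (V × K) →ₗ[K] V × K}

lemma unit_mul
    (hμ₁ : ∀ (v w : V) (a b : K), μ₁ ((v, a) ⊗ₜ (w, b)) = (μ (v ⊗ₜ w) + a • w + b • v, a * b))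
    (x : V × K) : μ₁ (((0 : V), (1 : K)) ⊗ₜ x) = x := by
  simp [hμ₁]

lemma mul_unit
    (hμ₁ : ∀ (v w : V) (a b : K), μ₁ ((v, a) ⊗ₜ (w, b)) = (μ (v ⊗ₜ w) + a • w + b • v, a * b))
    (x : V × K) : μ₁ (x ⊗ₜ ((0 : V), (1 : K))) = x := by
  simp [hμ₁]

variable {e₂ : V} {Δ₁ : (V × K) →ₗ[K] (V × K) ⊗[K] (V × K)}

lemma comul_unit
    (hΔ₁ : ∀ (v : V) (a : K), Δ₁ (v, a) =
      a • (((0 : V), (1 : K)) ⊗ₜ[K] ((0 : V), (1 : K))) +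
        (v, (0 : K)) ⊗ₜ[K] ((0 : V), (1 : K)) +
        ((0 : V), (1 : K)) ⊗ₜ[K] (v, (0 : K)) -
        (e₂, (0 : K)) ⊗ₜ[K] (v, (0 : K))) :
    Δ₁ ((0 : V), (1 : K)) = ((0 : V), (1 : K)) ⊗ₜ ((0 : V), (1 : K)) := by
  simp [hΔ₁, Prod.mk_zero_zero]

lemma defect_inl_inl
    (hunitr : ∀ x : V, μ (x ⊗ₜ[K] e₂) = x)
    (hμ₁ : ∀ (v w : V) (a b : K), μ₁ ((v, a) ⊗ₜ (w, b)) = (μ (v ⊗ₜ w) + a • w + b • v, a * b))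
    (hΔ₁ : ∀ (v : V) (a : K), Δ₁ (v, a) =
      a • (((0 : V), (1 : K)) ⊗ₜ[K] ((0 : V), (1 : K))) +
        (v, (0 : K)) ⊗ₜ[K] ((0 : V), (1 : K)) +
        ((0 : V), (1 : K)) ⊗ₜ[K] (v, (0 : K)) -
        (e₂, (0 : K)) ⊗ₜ[K] (v, (0 : K)))
    (v w : V) : defect μ₁ Δ₁ ((0 : V), (1 : K)) (v, 0) (w, 0) = 0 := by
  simp only [defect_apply, hμ₁, hΔ₁, hunitr, tensorMul_tmul, map_add, map_sub, map_zero,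
    LinearMap.add_apply, LinearMap.sub_apply, tmul_zero, zero_tmul, smul_zero, zero_smul, one_smul,
    add_zero, zero_add, mul_zero, mul_one, add_sub_cancel_right]
  abel

end Kaplansky

open InfinitesimalBialgebra Kaplansky in
theorem stmt_8_general (K : Type*) [Field K] (V : Type*) [AddCommGroup V] [Module K V]
    (μ : V ⊗[K] V →ₗ[K] V) (e₂ : V)
    (hunitr : ∀ x : V, μ (x ⊗ₜ[K] e₂) = x)
    (μ₁ : (V × K) ⊗[K] (V × K) →ₗ[K] V × K)
    (hμ₁ : ∀ (v w : V) (a b : K),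
      μ₁ ((v, a) ⊗ₜ[K] (w, b)) = (μ (v ⊗ₜ[K] w) + a • w + b • v, a * b))
    (Δ₁ : (V × K) →ₗ[K] (V × K) ⊗[K] (V × K))
    (hΔ₁ : ∀ (v : V) (a : K), Δ₁ (v, a) =
      a • (((0 : V), (1 : K)) ⊗ₜ[K] ((0 : V), (1 : K))) +
        (v, (0 : K)) ⊗ₜ[K] ((0 : V), (1 : K)) +
        ((0 : V), (1 : K)) ⊗ₜ[K] (v, (0 : K)) -
        (e₂, (0 : K)) ⊗ₜ[K] (v, (0 : K)))
    -- the componentwise product · on Ṽ ⊗ Ṽ induced by μ₁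
    (star : ((V × K) ⊗[K] (V × K)) → ((V × K) ⊗[K] (V × K)) → ((V × K) ⊗[K] (V × K)))
    (hstar : ∀ a b, star a b =
      TensorProduct.map μ₁ μ₁
        ((TensorProduct.tensorTensorTensorComm K (V × K) (V × K) (V × K) (V × K))
          (a ⊗ₜ[K] b))) :
    ∀ x y : V × K, Δ₁ (μ₁ (x ⊗ₜ[K] y)) =
      star (x ⊗ₜ[K] ((0 : V), (1 : K))) (Δ₁ y) +
        star (Δ₁ x) (((0 : V), (1 : K)) ⊗ₜ[K] y) - x ⊗ₜ[K] y := by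
  simp only [hstar, ← tensorMul_apply]
  refine defect_eq_zero_iff.mp ?_
  ext v w
  · exact defect_inl_inl hunitr hμ₁ hΔ₁ v w
  · exact defect_unit_right (mul_unit hμ₁) (comul_unit hΔ₁) _
  · exact defect_unit_left (unit_mul hμ₁) (comul_unit hΔ₁) _
  · exact defect_unit_left (unit_mul hμ₁) (comul_unit hΔ₁) _

/-- Kaplansky's first construction is a unital infinitesimal bialgebra:
Δ₁(μ₁(x⊗y)) = (x ⊗ e₁)·Δ₁(y) + Δ₁(x)·(e₁ ⊗ y) − x ⊗ y on Ṽ = V ⊕ K·e₁. -/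
theorem stmt_8 (K : Type*) [Field K] (V : Type*) [AddCommGroup V] [Module K V]
    (μ : V ⊗[K] V →ₗ[K] V) (e₂ : V)
    (hassoc : ∀ x y z : V, μ (μ (x ⊗ₜ[K] y) ⊗ₜ[K] z) = μ (x ⊗ₜ[K] μ (y ⊗ₜ[K] z)))
    (hunitl : ∀ x : V, μ (e₂ ⊗ₜ[K] x) = x)
    (hunitr : ∀ x : V, μ (x ⊗ₜ[K] e₂) = x)
    (μ₁ : (V × K) ⊗[K] (V × K) →ₗ[K] V × K)
    (hμ₁ : ∀ (v w : V) (a b : K),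
      μ₁ ((v, a) ⊗ₜ[K] (w, b)) = (μ (v ⊗ₜ[K] w) + a • w + b • v, a * b))
    (Δ₁ : (V × K) →ₗ[K] (V × K) ⊗[K] (V × K))
    (hΔ₁ : ∀ (v : V) (a : K), Δ₁ (v, a) =
      a • (((0 : V), (1 : K)) ⊗ₜ[K] ((0 : V), (1 : K))) +
        (v, (0 : K)) ⊗ₜ[K] ((0 : V), (1 : K)) +
        ((0 : V), (1 : K)) ⊗ₜ[K] (v, (0 : K)) -
        (e₂, (0 : K)) ⊗ₜ[K] (v, (0 : K)))
    -- the componentwise product · on Ṽ ⊗ Ṽ induced by μ₁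
    (star : ((V × K) ⊗[K] (V × K)) → ((V × K) ⊗[K] (V × K)) → ((V × K) ⊗[K] (V × K)))
    (hstar : ∀ a b, star a b =
      TensorProduct.map μ₁ μ₁
        ((TensorProduct.tensorTensorTensorComm K (V × K) (V × K) (V × K) (V × K))
          (a ⊗ₜ[K] b))) :
    ∀ x y : V × K, Δ₁ (μ₁ (x ⊗ₜ[K] y)) =
      star (x ⊗ₜ[K] ((0 : V), (1 : K))) (Δ₁ y) +
        star (Δ₁ x) (((0 : V), (1 : K)) ⊗ₜ[K] y) - x ⊗ₜ[K] y :=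
  stmt_8_general K V μ e₂ hunitr μ₁ hμ₁ Δ₁ hΔ₁ star hstar
end

section
/- With the same setup of two unital algebras (V, μ₁), (V, μ₂) sharing unit e₂, the extension μ̃₂ of μ₂ to Ṽ = V ⊕ K·e₁ is compatible with the first Kaplansky comultiplication Δ₁ in the bialgebra sense: Δ₁(μ̃₂(x ⊗ y)) = Δ₁(x)·Δ₁(y) for all x, y ∈ Ṽ, where · is the componentwise product on Ṽ ⊗ Ṽ induced by μ̃₂. -/
open TensorProduct

/-!
Both sides of the identity are bilinear in `x` and `y`, and `Ṽ = V × K` is spanned by the new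
unit `e₁ = (0, 1)` and by `V`. Since `e₁ ⊗ e₁` is the unit of the product on `Ṽ ⊗ Ṽ` and
`Δ₁ e₁ = e₁ ⊗ e₁`, every pair involving `e₁` is immediate. For `v, w ∈ V`, expanding
`Δ₁ v · Δ₁ w` gives nine terms; because `e₂` is a two-sided unit of `μ₂` they cancel in pairs
down to `Δ₁ (μ₂ (v ⊗ w))`.
-/

namespace Kaplansky

variable {R : Type*} [CommRing R]

theorem bilinear_ext_prod {M N : Type*} [AddCommGroup M] [Module R M] [AddCommGroup N]
    [Module R N] {B₁ B₂ : M × R →ₗ[R] M × R →ₗ[R] N}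
    (hVV : ∀ v w : M, B₁ (v, 0) (w, 0) = B₂ (v, 0) (w, 0))
    (hV1 : ∀ v : M, B₁ (v, 0) (0, 1) = B₂ (v, 0) (0, 1))
    (h1V : ∀ w : M, B₁ (0, 1) (w, 0) = B₂ (0, 1) (w, 0))
    (h11 : B₁ (0, 1) (0, 1) = B₂ (0, 1) (0, 1)) : B₁ = B₂ := by
  ext v
  · exact hVV v _
  · exact hV1 v
  · exact h1V v
  · exact h11

section TensorMul

variable {M : Type*} [AddCommGroup M] [Module R M]

def tensorMul (m : M ⊗[R] M →ₗ[R] M) : M ⊗[R] M →ₗ[R] M ⊗[R] M →ₗ[R] M ⊗[R] M :=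
  curry (map m m ∘ₗ (tensorTensorTensorComm R M M M M).toLinearMap)

@[simp]
theorem tensorMul_tmul (m : M ⊗[R] M →ₗ[R] M) (a b c d : M) :
    tensorMul m (a ⊗ₜ b) (c ⊗ₜ d) = m (a ⊗ₜ c) ⊗ₜ m (b ⊗ₜ d) :=
  rfl

variable {m : M ⊗[R] M →ₗ[R] M} {u : M}

theorem tensorMul_unit_left (hl : ∀ x, m (u ⊗ₜ x) = x) (t : M ⊗[R] M) :
    tensorMul m (u ⊗ₜ u) t = t := by
  induction t using TensorProduct.induction_on with
  | zero => exact map_zero _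
  | tmul a b => rw [tensorMul_tmul, hl, hl]
  | add s t hs ht => rw [map_add, hs, ht]

theorem tensorMul_unit_right (hr : ∀ x, m (x ⊗ₜ u) = x) (t : M ⊗[R] M) :
    tensorMul m t (u ⊗ₜ u) = t := by
  induction t using TensorProduct.induction_on with
  | zero => rw [map_zero, LinearMap.zero_apply]
  | tmul a b => rw [tensorMul_tmul, hr, hr]
  | add s t hs ht => rw [map_add, LinearMap.add_apply, hs, ht]

end TensorMul

variable {V : Type*} [AddCommGroup V] [Module R V] {μ : V ⊗[R] V →ₗ[R] V}
  {m : (V × R) ⊗[R] (V × R) →ₗ[R] V × R}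

section Unitization

variable (hm : ∀ (v w : V) (a b : R), m ((v, a) ⊗ₜ (w, b)) = (μ (v ⊗ₜ w) + a • w + b • v, a * b))
include hm

theorem unit_tmul (x : V × R) : m ((0, 1) ⊗ₜ x) = x := by
  simp [hm]

theorem tmul_unit (x : V × R) : m (x ⊗ₜ (0, 1)) = x := by
  simp [hm]

theorem inl_tmul_inl (v w : V) : m ((v, 0) ⊗ₜ (w, 0)) = (μ (v ⊗ₜ w), 0) := by
  simp [hm]

end Unitization

theorem comul_mul {e : V} (hl : ∀ x, μ (e ⊗ₜ x) = x) (hr : ∀ x, μ (x ⊗ₜ e) = x)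
    (hm : ∀ (v w : V) (a b : R), m ((v, a) ⊗ₜ (w, b)) = (μ (v ⊗ₜ w) + a • w + b • v, a * b))
    {Δ : V × R →ₗ[R] (V × R) ⊗[R] (V × R)}
    (hΔ : ∀ (v : V) (a : R), Δ (v, a) = a • ((0, 1) ⊗ₜ (0, 1)) + (v, 0) ⊗ₜ (0, 1) +
      (0, 1) ⊗ₜ (v, 0) - (e, 0) ⊗ₜ (v, 0))
    (x y : V × R) : Δ (m (x ⊗ₜ y)) = tensorMul m (Δ x) (Δ y) := by
  have hΔ₁ : Δ (0, 1) = (0, 1) ⊗ₜ (0, 1) := by simp [hΔ, Prod.mk_zero_zero]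
  have hΔV (v : V) : Δ (v, 0) = (v, 0) ⊗ₜ (0, 1) + (0, 1) ⊗ₜ (v, 0) - (e, 0) ⊗ₜ (v, 0) := by
    simp [hΔ]
  refine LinearMap.congr_fun₂
    (bilinear_ext_prod (B₁ := (TensorProduct.mk R _ _).compr₂ (Δ ∘ₗ m))
      (B₂ := (tensorMul m).compl₁₂ Δ Δ) ?_ ?_ ?_ ?_) x y
  · intro v w
    simp only [LinearMap.compr₂_apply, LinearMap.compl₁₂_apply, mk_apply, LinearMap.comp_apply,
      inl_tmul_inl hm, hΔV, map_add, map_sub, LinearMap.add_apply, LinearMap.sub_apply,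
      tensorMul_tmul, unit_tmul hm, tmul_unit hm, hl, hr]
    abel
  · intro v
    simp [tmul_unit hm, hΔ₁, tensorMul_unit_right (tmul_unit hm)]
  · intro w
    simp [unit_tmul hm, hΔ₁, tensorMul_unit_left (unit_tmul hm)]
  · simp [unit_tmul hm, hΔ₁, tensorMul_unit_left (unit_tmul hm)]

end Kaplansky

theorem stmt_11_general (K : Type*) [Field K] (V : Type*) [AddCommGroup V] [Module K V]
    (μ₂ : V ⊗[K] V →ₗ[K] V) (e₂ : V)
    (hunitl₂ : ∀ x : V, μ₂ (e₂ ⊗ₜ[K] x) = x)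
    (hunitr₂ : ∀ x : V, μ₂ (x ⊗ₜ[K] e₂) = x)
    -- the extension μ̃₂ of μ₂ to Ṽ = V × K with new unit e₁ = (0,1)
    (m₂ : (V × K) ⊗[K] (V × K) →ₗ[K] V × K)
    (hm₂ : ∀ (v w : V) (a b : K),
      m₂ ((v, a) ⊗ₜ[K] (w, b)) = (μ₂ (v ⊗ₜ[K] w) + a • w + b • v, a * b))
    -- the first Kaplansky comultiplication Δ₁
    (Δ₁ : (V × K) →ₗ[K] (V × K) ⊗[K] (V × K))
    (hΔ₁ : ∀ (v : V) (a : K), Δ₁ (v, a) =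
      a • (((0 : V), (1 : K)) ⊗ₜ[K] ((0 : V), (1 : K))) +
        (v, (0 : K)) ⊗ₜ[K] ((0 : V), (1 : K)) +
        ((0 : V), (1 : K)) ⊗ₜ[K] (v, (0 : K)) -
        (e₂, (0 : K)) ⊗ₜ[K] (v, (0 : K))) :
    ∀ x y : V × K, Δ₁ (m₂ (x ⊗ₜ[K] y)) =
      TensorProduct.map m₂ m₂
        ((TensorProduct.tensorTensorTensorComm K (V × K) (V × K) (V × K) (V × K))
          (Δ₁ x ⊗ₜ[K] Δ₁ y)) :=
  Kaplansky.comul_mul hunitl₂ hunitr₂ hm₂ hΔ₁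

/-- The extension μ̃₂ of μ₂ to Ṽ = V ⊕ K·e₁ is compatible (bialgebra sense) with the
first Kaplansky comultiplication Δ₁. -/
theorem stmt_11 (K : Type*) [Field K] (V : Type*) [AddCommGroup V] [Module K V]
    (μ₁ μ₂ : V ⊗[K] V →ₗ[K] V) (e₂ : V)
    (hassoc₁ : ∀ x y z : V, μ₁ (μ₁ (x ⊗ₜ[K] y) ⊗ₜ[K] z) = μ₁ (x ⊗ₜ[K] μ₁ (y ⊗ₜ[K] z)))
    (hunitl₁ : ∀ x : V, μ₁ (e₂ ⊗ₜ[K] x) = x)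
    (hunitr₁ : ∀ x : V, μ₁ (x ⊗ₜ[K] e₂) = x)
    (hassoc₂ : ∀ x y z : V, μ₂ (μ₂ (x ⊗ₜ[K] y) ⊗ₜ[K] z) = μ₂ (x ⊗ₜ[K] μ₂ (y ⊗ₜ[K] z)))
    (hunitl₂ : ∀ x : V, μ₂ (e₂ ⊗ₜ[K] x) = x)
    (hunitr₂ : ∀ x : V, μ₂ (x ⊗ₜ[K] e₂) = x)
    -- the extension μ̃₂ of μ₂ to Ṽ = V × K with new unit e₁ = (0,1)
    (m₂ : (V × K) ⊗[K] (V × K) →ₗ[K] V × K)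
    (hm₂ : ∀ (v w : V) (a b : K),
      m₂ ((v, a) ⊗ₜ[K] (w, b)) = (μ₂ (v ⊗ₜ[K] w) + a • w + b • v, a * b))
    -- the first Kaplansky comultiplication Δ₁
    (Δ₁ : (V × K) →ₗ[K] (V × K) ⊗[K] (V × K))
    (hΔ₁ : ∀ (v : V) (a : K), Δ₁ (v, a) =
      a • (((0 : V), (1 : K)) ⊗ₜ[K] ((0 : V), (1 : K))) +
        (v, (0 : K)) ⊗ₜ[K] ((0 : V), (1 : K)) +
        ((0 : V), (1 : K)) ⊗ₜ[K] (v, (0 : K)) -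
        (e₂, (0 : K)) ⊗ₜ[K] (v, (0 : K))) :
    ∀ x y : V × K, Δ₁ (m₂ (x ⊗ₜ[K] y)) =
      TensorProduct.map m₂ m₂
        ((TensorProduct.tensorTensorTensorComm K (V × K) (V × K) (V × K) (V × K))
          (Δ₁ x ⊗ₜ[K] Δ₁ y)) :=
  stmt_11_general K V μ₂ e₂ hunitl₂ hunitr₂ m₂ hm₂ Δ₁ hΔ₁
end

section
/- On the 2-dimensional space with basis {e₁, e₂} and unit e₁, the multiplication μ₂² with μ₂²(e₂ ⊗ e₂) = 0 admits no bialgebra structure: there is no coassociative counital Δ : V → V ⊗ V which is an algebra morphism for μ₂² with Δ(e₁) = e₁ ⊗ e₁. -/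
open TensorProduct

/-! `ε(e₂)² = ε(e₂ e₂) = 0` forces `ε(e₂) = 0`, and then the two counit axioms pin `Δ(e₂)` down
to `e₁ ⊗ e₂ + e₂ ⊗ e₁ + d • e₂ ⊗ e₂`. In the square of this element only the two cross terms
survive, giving `2 • e₂ ⊗ e₂ ≠ 0`, whereas multiplicativity of `Δ` demands
`Δ(e₂)² = Δ(e₂ e₂) = 0`. -/

section Bialgebra

variable {R M : Type*} [CommSemiring R] [AddCommMonoid M] [Module R M]

def tensorSquareMul (μ : M ⊗[R] M →ₗ[R] M) (s t : M ⊗[R] M) : M ⊗[R] M :=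
  map μ μ (tensorTensorTensorComm R M M M M (s ⊗ₜ t))

lemma counit_eq_zero_of_mul_self_eq_zero [NoZeroDivisors R] {μ : M ⊗[R] M →ₗ[R] M}
    {ε : M →ₗ[R] R} (hε : ∀ x y, ε (μ (x ⊗ₜ y)) = ε x * ε y) {x : M}
    (hx : μ (x ⊗ₜ x) = 0) : ε x = 0 :=
  mul_self_eq_zero.mp <| by rw [← hε, hx, map_zero]

lemma tensorSquareMul_self_eq_two_smul {μ : M ⊗[R] M →ₗ[R] M} {x y : M}
    (hxy : μ (x ⊗ₜ y) = y) (hyx : μ (y ⊗ₜ x) = y) (hyy : μ (y ⊗ₜ y) = 0) (d : R) :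
    tensorSquareMul μ (x ⊗ₜ y + y ⊗ₜ x + d • y ⊗ₜ y) (x ⊗ₜ y + y ⊗ₜ x + d • y ⊗ₜ y) =
      (2 : R) • y ⊗ₜ y := by
  simp only [tensorSquareMul, tmul_add, add_tmul, map_add, map_smul, tmul_smul, ← smul_tmul',
    tensorTensorTensorComm_tmul, map_tmul, hxy, hyx, hyy, tmul_zero, zero_tmul, smul_zero]
  rw [two_smul]; abel

end Bialgebra

section TwoDim

variable {R : Type*} [CommSemiring R]

lemma exists_tensor_eq_sum_basis (t : (R × R) ⊗[R] (R × R)) :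
    ∃ a b c d : R, t =
      a • ((1, 0) ⊗ₜ (1, 0)) + b • ((1, 0) ⊗ₜ (0, 1)) +
      c • ((0, 1) ⊗ₜ (1, 0)) + d • ((0, 1) ⊗ₜ (0, 1)) := by
  induction t using TensorProduct.induction_on with
  | zero => exact ⟨0, 0, 0, 0, by simp⟩
  | tmul x y =>
    refine ⟨x.1 * y.1, x.1 * y.2, x.2 * y.1, x.2 * y.2, ?_⟩
    have hx : x = x.1 • ((1 : R), (0 : R)) + x.2 • ((0 : R), (1 : R)) := by ext <;> simp
    have hy : y = y.1 • ((1 : R), (0 : R)) + y.2 • ((0 : R), (1 : R)) := by ext <;> simp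
    conv_lhs => rw [hx, hy]
    simp only [tmul_add, add_tmul, smul_tmul, tmul_smul]
    module
  | add s t hs ht =>
    obtain ⟨a, b, c, d, rfl⟩ := hs
    obtain ⟨a', b', c', d', rfl⟩ := ht
    exact ⟨a + a', b + b', c + c', d + d', by module⟩

lemma exists_eq_of_counit {ε : R × R →ₗ[R] R} (h₁ : ε (1, 0) = 1) (h₂ : ε (0, 1) = 0)
    {t : (R × R) ⊗[R] (R × R)} (hl : TensorProduct.lid R (R × R) (map ε LinearMap.id t) = (0, 1))
    (hr : TensorProduct.rid R (R × R) (map LinearMap.id ε t) = (0, 1)) :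
    ∃ d : R, t = (1, 0) ⊗ₜ (0, 1) + (0, 1) ⊗ₜ (1, 0) + d • ((0, 1) ⊗ₜ (0, 1)) := by
  obtain ⟨a, b, c, d, rfl⟩ := exists_tensor_eq_sum_basis t
  simp only [map_add, map_smul, map_tmul, LinearMap.id_coe, id_eq, h₁, h₂, lid_tmul, rid_tmul,
    Prod.smul_mk, smul_eq_mul, mul_zero, mul_one, zero_smul, smul_zero, add_zero, zero_add,
    Prod.mk_add_mk, Prod.mk.injEq] at hl hr
  obtain ⟨rfl, rfl⟩ := hl
  obtain ⟨-, rfl⟩ := hr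
  exact ⟨d, by simp⟩

lemma eq_zero_of_smul_tmul_snd_eq_zero {r : R}
    (h : r • (((0, 1) : R × R) ⊗ₜ[R] ((0, 1) : R × R)) = 0) : r = 0 := by
  simpa using congrArg (fun t ↦ TensorProduct.lid R R
    (map (LinearMap.snd R R R) (LinearMap.snd R R R) t)) h

end TwoDim

theorem stmt_13_general (K : Type*) [Field K] [CharZero K]
    (e₁ e₂ : K × K) (he₁ : e₁ = ((1 : K), (0 : K))) (he₂ : e₂ = ((0 : K), (1 : K)))
    (μ : (K × K) ⊗[K] (K × K) →ₗ[K] K × K)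
    (h12 : μ (e₁ ⊗ₜ[K] e₂) = e₂)
    (h21 : μ (e₂ ⊗ₜ[K] e₁) = e₂) (h22 : μ (e₂ ⊗ₜ[K] e₂) = 0) :
    ¬ ∃ (Δ : (K × K) →ₗ[K] (K × K) ⊗[K] (K × K)) (ε : (K × K) →ₗ[K] K),
      Δ e₁ = e₁ ⊗ₜ[K] e₁ ∧ ε e₁ = 1 ∧
      (∀ x : K × K,
        (TensorProduct.assoc K (K × K) (K × K) (K × K))
            (TensorProduct.map Δ LinearMap.id (Δ x)) =
          TensorProduct.map LinearMap.id Δ (Δ x)) ∧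
      (∀ x : K × K,
        (TensorProduct.lid K (K × K)) (TensorProduct.map ε LinearMap.id (Δ x)) = x) ∧
      (∀ x : K × K,
        (TensorProduct.rid K (K × K)) (TensorProduct.map LinearMap.id ε (Δ x)) = x) ∧
      (∀ x y : K × K, Δ (μ (x ⊗ₜ[K] y)) =
        TensorProduct.map μ μ
          ((TensorProduct.tensorTensorTensorComm K (K × K) (K × K) (K × K) (K × K))
            (Δ x ⊗ₜ[K] Δ y))) ∧
      (∀ x y : K × K, ε (μ (x ⊗ₜ[K] y)) = ε x * ε y) := by
  subst he₁ he₂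
  rintro ⟨Δ, ε, -, hε₁, -, hlid, hrid, hΔmul, hεmul⟩
  have hε₂ : ε (0, 1) = 0 := counit_eq_zero_of_mul_self_eq_zero hεmul h22
  obtain ⟨d, hd⟩ := exists_eq_of_counit hε₁ hε₂ (hlid _) (hrid _)
  have hsq : tensorSquareMul μ (Δ (0, 1)) (Δ (0, 1)) = 0 := by
    rw [tensorSquareMul, ← hΔmul, h22, map_zero]
  rw [hd, tensorSquareMul_self_eq_two_smul h12 h21 h22] at hsq
  exact two_ne_zero (eq_zero_of_smul_tmul_snd_eq_zero hsq)

/-- The 2-dimensional algebra μ₂² (with μ(e₂⊗e₂)=0, unit e₁) admits no bialgebra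
structure with Δ(e₁) = e₁ ⊗ e₁. -/
theorem stmt_13 (K : Type*) [Field K] [CharZero K]
    (e₁ e₂ : K × K) (he₁ : e₁ = ((1 : K), (0 : K))) (he₂ : e₂ = ((0 : K), (1 : K)))
    (μ : (K × K) ⊗[K] (K × K) →ₗ[K] K × K)
    (h11 : μ (e₁ ⊗ₜ[K] e₁) = e₁) (h12 : μ (e₁ ⊗ₜ[K] e₂) = e₂)
    (h21 : μ (e₂ ⊗ₜ[K] e₁) = e₂) (h22 : μ (e₂ ⊗ₜ[K] e₂) = 0) :
    ¬ ∃ (Δ : (K × K) →ₗ[K] (K × K) ⊗[K] (K × K)) (ε : (K × K) →ₗ[K] K),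
      Δ e₁ = e₁ ⊗ₜ[K] e₁ ∧ ε e₁ = 1 ∧
      (∀ x : K × K,
        (TensorProduct.assoc K (K × K) (K × K) (K × K))
            (TensorProduct.map Δ LinearMap.id (Δ x)) =
          TensorProduct.map LinearMap.id Δ (Δ x)) ∧
      (∀ x : K × K,
        (TensorProduct.lid K (K × K)) (TensorProduct.map ε LinearMap.id (Δ x)) = x) ∧
      (∀ x : K × K,
        (TensorProduct.rid K (K × K)) (TensorProduct.map LinearMap.id ε (Δ x)) = x) ∧
      (∀ x y : K × K, Δ (μ (x ⊗ₜ[K] y)) =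
        TensorProduct.map μ μ
          ((TensorProduct.tensorTensorTensorComm K (K × K) (K × K) (K × K) (K × K))
            (Δ x ⊗ₜ[K] Δ y))) ∧
      (∀ x y : K × K, ε (μ (x ⊗ₜ[K] y)) = ε x * ε y) :=
  stmt_13_general K e₁ e₂ he₁ he₂ μ h12 h21 h22
end

section
/- On V = K³ with basis {e₁, e₂, e₃}, the multiplication μ₄³ with e₁ a two-sided unit and all other products of basis vectors equal to zero (μ(eᵢ⊗eⱼ) = 0 for i, j ∈ {2,3}) is associative, and it admits no bialgebra structure: no coassociative counital comultiplication Δ with Δ(e₁) = e₁ ⊗ e₁ can be an algebra morphism for μ₄³. -/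
/-!
Writing `x = x₀ e₀ + n` with `n` in the span of the other basis vectors, the conditions on μ say
`μ (x ⊗ y) = x₀ y + y₀ x - x₀ y₀ e₀`, which is visibly associative. A multiplicative counit
kills every `eᵢ` with `i ≠ 0`, because `ε(eᵢ)² = ε(eᵢ eᵢ) = 0`; so `ε x = x₀`, and the counit
axioms force `Δ e₁` to have coefficient `0` at `e₀ ⊗ e₀` and `1` at `e₀ ⊗ e₁` and `e₁ ⊗ e₀`.
Then the `e₁ ⊗ e₁`-coefficient of `Δ e₁ · Δ e₁` is `2`, whereas `Δ (e₁ e₁) = Δ 0 = 0`.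
-/

open TensorProduct

section TensorCoeff

variable {K ι : Type*} [Field K]

noncomputable def tensorCoeff (j k : ι) : (ι → K) ⊗[K] (ι → K) →ₗ[K] K :=
  TensorProduct.lift ((LinearMap.mul K K).compl₁₂ (LinearMap.proj j) (LinearMap.proj k))

@[simp]
theorem tensorCoeff_tmul (j k : ι) (x y : ι → K) : tensorCoeff j k (x ⊗ₜ[K] y) = x j * y k := by
  simp [tensorCoeff]

theorem rid_map_proj_apply (o j : ι) (T : (ι → K) ⊗[K] (ι → K)) :
    TensorProduct.rid K (ι → K) (map LinearMap.id (LinearMap.proj o) T) j = tensorCoeff j o T := by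
  induction T using TensorProduct.induction_on <;> simp_all [mul_comm]

theorem lid_map_proj_apply (o k : ι) (T : (ι → K) ⊗[K] (ι → K)) :
    TensorProduct.lid K (ι → K) (map (LinearMap.proj o) LinearMap.id T) k = tensorCoeff o k T := by
  induction T using TensorProduct.induction_on <;> simp_all

end TensorCoeff

namespace UnitalSqZero

variable {K ι : Type*} [Field K] [DecidableEq ι]

/-- The multiplication of `K e_o ⊕ N`, where `N` is spanned by the other basis vectors and
`N · N = 0` (the unitization `TrivSqZeroExt K N`). -/
noncomputable def mul (o : ι) : (ι → K) ⊗[K] (ι → K) →ₗ[K] (ι → K) :=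
  TensorProduct.lift <| LinearMap.mk₂ K
    (fun x y => x o • y + y o • x - (x o * y o) • Pi.single o 1)
    (fun _ _ _ => by simp only [Pi.add_apply]; module)
    (fun _ _ _ => by simp only [Pi.smul_apply, smul_eq_mul]; module)
    (fun _ _ _ => by simp only [Pi.add_apply]; module)
    (fun _ _ _ => by simp only [Pi.smul_apply, smul_eq_mul]; module)

@[simp]
theorem mul_tmul (o : ι) (x y : ι → K) :
    mul o (x ⊗ₜ[K] y) = x o • y + y o • x - (x o * y o) • Pi.single o 1 := rfl

theorem mul_assoc (o : ι) (x y z : ι → K) :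
    mul o (mul o (x ⊗ₜ[K] y) ⊗ₜ[K] z) = mul o (x ⊗ₜ[K] mul o (y ⊗ₜ[K] z)) := by
  funext k
  simp only [mul_tmul, Pi.sub_apply, Pi.add_apply, Pi.smul_apply, smul_eq_mul, Pi.single_apply]
  split_ifs <;> ring

theorem eq_mul [Finite ι] {o : ι} {μ : (ι → K) ⊗[K] (ι → K) →ₗ[K] (ι → K)}
    (hunit : ∀ x, μ (Pi.single o 1 ⊗ₜ[K] x) = x ∧ μ (x ⊗ₜ[K] Pi.single o 1) = x)
    (hzero : ∀ i j, i ≠ o → j ≠ o → μ (Pi.single i 1 ⊗ₜ[K] Pi.single j 1) = 0) :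
    μ = mul o := by
  refine ((Pi.basisFun K ι).tensorProduct (Pi.basisFun K ι)).ext fun ⟨i, j⟩ => ?_
  simp only [Module.Basis.tensorProduct_apply, Pi.basisFun_apply, mul_tmul]
  rcases eq_or_ne i o with rfl | hi
  · rw [(hunit _).1]
    by_cases hj : j = i <;> simp [hj]
  rcases eq_or_ne j o with rfl | hj
  · rw [(hunit _).2]
    simp [hi]
  · rw [hzero i j hi hj]
    simp [hi, hj]

theorem counit_eq_proj [Finite ι] {o : ι} {ε : (ι → K) →ₗ[K] K} (hε : ε (Pi.single o 1) = 1)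
    (hmul : ∀ x y, ε (mul o (x ⊗ₜ[K] y)) = ε x * ε y) : ε = LinearMap.proj o := by
  refine LinearMap.pi_ext' fun i => LinearMap.ext_ring ?_
  by_cases hi : i = o
  · subst hi; simpa using hε
  · have hsq : ε (Pi.single i 1) * ε (Pi.single i 1) = 0 := by
      rw [← hmul]; simp [hi]
    simpa [Ne.symm hi] using hsq

theorem tensorCoeff_map_mul_mul {o i : ι} (hi : i ≠ o) (S T : (ι → K) ⊗[K] (ι → K)) :
    tensorCoeff i i (map (mul o) (mul o) (tensorTensorTensorComm K _ _ _ _ (S ⊗ₜ[K] T))) =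
      tensorCoeff o o S * tensorCoeff i i T + tensorCoeff o i S * tensorCoeff i o T +
        tensorCoeff i o S * tensorCoeff o i T + tensorCoeff i i S * tensorCoeff o o T := by
  induction S using TensorProduct.induction_on with
  | zero => simp only [zero_tmul, LinearEquiv.map_zero, LinearMap.map_zero, zero_mul, add_zero]
  | add S₁ S₂ h₁ h₂ => simp only [add_tmul, map_add, h₁, h₂]; ring
  | tmul a b =>
    induction T using TensorProduct.induction_on with
    | zero => simp only [tmul_zero, LinearEquiv.map_zero, LinearMap.map_zero, mul_zero, add_zero]
    | add T₁ T₂ h₁ h₂ => simp only [tmul_add, map_add, h₁, h₂]; ring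
    | tmul c d =>
      simp only [tensorTensorTensorComm_tmul, map_tmul, mul_tmul, tensorCoeff_tmul, Pi.sub_apply,
        Pi.add_apply, Pi.smul_apply, smul_eq_mul, Pi.single_eq_of_ne hi, mul_zero, sub_zero]
      ring

theorem not_exists_counital_comul_mul [Finite ι] (h2 : (2 : K) ≠ 0) {o i : ι} (hi : i ≠ o) :
    ¬ ∃ (Δ : (ι → K) →ₗ[K] (ι → K) ⊗[K] (ι → K)) (ε : (ι → K) →ₗ[K] K),
      ε (Pi.single o 1) = 1 ∧
      (∀ x, TensorProduct.lid K (ι → K) (map ε LinearMap.id (Δ x)) = x) ∧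
      (∀ x, TensorProduct.rid K (ι → K) (map LinearMap.id ε (Δ x)) = x) ∧
      (∀ x y, Δ (mul o (x ⊗ₜ[K] y)) =
        map (mul o) (mul o) (tensorTensorTensorComm K _ _ _ _ (Δ x ⊗ₜ[K] Δ y))) ∧
      (∀ x y, ε (mul o (x ⊗ₜ[K] y)) = ε x * ε y) := by
  rintro ⟨Δ, ε, hε, hcounitL, hcounitR, hΔmul, hεmul⟩
  obtain rfl := counit_eq_proj hε hεmul
  set D := Δ (Pi.single i 1)
  have hoo : tensorCoeff o o D = 0 := by
    rw [← rid_map_proj_apply, hcounitR]; simp [Ne.symm hi]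
  have hio : tensorCoeff i o D = 1 := by
    rw [← rid_map_proj_apply, hcounitR]; simp
  have hoi : tensorCoeff o i D = 1 := by
    rw [← lid_map_proj_apply, hcounitL]; simp
  have hsq : mul o (Pi.single i 1 ⊗ₜ[K] Pi.single i 1) = (0 : ι → K) := by
    simp [hi]
  have h := congrArg (tensorCoeff i i) (hΔmul (Pi.single i 1) (Pi.single i 1))
  rw [hsq, map_zero, map_zero, tensorCoeff_map_mul_mul hi, hoo, hio, hoi] at h
  exact h2 (by linear_combination -h)

end UnitalSqZero

/-- The 3-dimensional algebra μ₄³ (e₁ a two-sided unit, all other products of basis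
vectors zero) is associative but admits no bialgebra structure with Δ(e₁)=e₁⊗e₁. -/
theorem stmt_17 (K : Type*) [Field K] [CharZero K]
    (e : Fin 3 → (Fin 3 → K)) (he : ∀ i, e i = Pi.single i 1)
    (μ : (Fin 3 → K) ⊗[K] (Fin 3 → K) →ₗ[K] (Fin 3 → K))
    (hunit : ∀ x : Fin 3 → K, μ (e 0 ⊗ₜ[K] x) = x ∧ μ (x ⊗ₜ[K] e 0) = x)
    (hzero : ∀ i j : Fin 3, i ≠ 0 → j ≠ 0 → μ (e i ⊗ₜ[K] e j) = 0) :
    (∀ x y z : Fin 3 → K, μ (μ (x ⊗ₜ[K] y) ⊗ₜ[K] z) = μ (x ⊗ₜ[K] μ (y ⊗ₜ[K] z))) ∧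
    ¬ ∃ (Δ : (Fin 3 → K) →ₗ[K] (Fin 3 → K) ⊗[K] (Fin 3 → K)) (ε : (Fin 3 → K) →ₗ[K] K),
      Δ (e 0) = e 0 ⊗ₜ[K] e 0 ∧ ε (e 0) = 1 ∧
      (∀ x : Fin 3 → K,
        (TensorProduct.assoc K (Fin 3 → K) (Fin 3 → K) (Fin 3 → K))
            (TensorProduct.map Δ LinearMap.id (Δ x)) =
          TensorProduct.map LinearMap.id Δ (Δ x)) ∧
      (∀ x : Fin 3 → K,
        (TensorProduct.lid K (Fin 3 → K)) (TensorProduct.map ε LinearMap.id (Δ x)) = x) ∧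
      (∀ x : Fin 3 → K,
        (TensorProduct.rid K (Fin 3 → K)) (TensorProduct.map LinearMap.id ε (Δ x)) = x) ∧
      (∀ x y : Fin 3 → K, Δ (μ (x ⊗ₜ[K] y)) =
        TensorProduct.map μ μ
          ((TensorProduct.tensorTensorTensorComm K (Fin 3 → K) (Fin 3 → K) (Fin 3 → K) (Fin 3 → K))
            (Δ x ⊗ₜ[K] Δ y))) ∧
      (∀ x y : Fin 3 → K, ε (μ (x ⊗ₜ[K] y)) = ε x * ε y) := by
  obtain rfl : e = fun i => Pi.single i 1 := funext he
  obtain rfl : μ = UnitalSqZero.mul 0 := UnitalSqZero.eq_mul hunit hzero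
  refine ⟨UnitalSqZero.mul_assoc 0, fun ⟨Δ, ε, _, hε, _, hL, hR, hΔ, hεm⟩ => ?_⟩
  exact UnitalSqZero.not_exists_counital_comul_mul two_ne_zero (one_ne_zero : (1 : Fin 3) ≠ 0)
    ⟨Δ, ε, hε, hL, hR, hΔ, hεm⟩
end

section
/- The tensor algebra T(V) with concatenation product and deconcatenation coproduct Δ(v₁⋯vₙ) = Σ_{i=0}^{n} (v₁⋯vᵢ) ⊗ (v_{i+1}⋯vₙ) satisfies the unital infinitesimal relation: Δ(a·b) = (a ⊗ 1)·Δ(b) + Δ(a)·(1 ⊗ b) − a ⊗ b for all a, b ∈ T(V), where · on T(V) ⊗ T(V) is the componentwise concatenation product. -/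
open TensorProduct

/-!
Both sides of the relation are bilinear in `(a, b)`, and products of generators
`v₁ ⋯ vₙ` span `T(V)`, so it suffices to check it on two words `l` and `m`. There the
relation, written as `Δ(lm) + l ⊗ m = (l ⊗ 1) Δ(m) + Δ(l) (1 ⊗ m)`, is a splitting of the sum
of deconcatenations of `lm` at the cut between `l` and `m`: cuts inside `l` come from
`Δ(l) (1 ⊗ m)`, cuts inside `m` from `(l ⊗ 1) Δ(m)`, and the cut `l ⊗ m` is counted by both.
-/

section Deconcatenation

variable {R A α : Type*} [CommSemiring R] [Semiring A] [Algebra R A] (f : α → A)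

def splitTmul (l : List α) (i : ℕ) : A ⊗[R] A :=
  ((l.take i).map f).prod ⊗ₜ[R] ((l.drop i).map f).prod

def deconcatenation (l : List α) : A ⊗[R] A :=
  ∑ i ∈ Finset.range (l.length + 1), splitTmul (R := R) f l i

theorem deconcatenation_mul_one_tmul (l m : List α) :
    deconcatenation (R := R) f l * (1 ⊗ₜ (m.map f).prod) =
      ∑ i ∈ Finset.range (l.length + 1), splitTmul (R := R) f (l ++ m) i := by
  rw [deconcatenation, Finset.sum_mul]
  refine Finset.sum_congr rfl fun i hi => ?_
  have hil : i ≤ l.length := Nat.lt_succ_iff.mp (Finset.mem_range.mp hi)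
  rw [splitTmul, splitTmul, Algebra.TensorProduct.tmul_mul_tmul, mul_one,
    List.take_append_of_le_length hil, List.drop_append_of_le_length hil, List.map_append,
    List.prod_append]

theorem tmul_one_mul_deconcatenation (l m : List α) :
    ((l.map f).prod ⊗ₜ 1) * deconcatenation (R := R) f m =
      ∑ j ∈ Finset.range (m.length + 1), splitTmul (R := R) f (l ++ m) (l.length + j) := by
  rw [deconcatenation, Finset.mul_sum]
  refine Finset.sum_congr rfl fun j _ => ?_
  rw [splitTmul, splitTmul, Algebra.TensorProduct.tmul_mul_tmul, one_mul,
    List.take_length_add_append, List.drop_length_add_append, List.map_append, List.prod_append]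

theorem deconcatenation_append_add_tmul (l m : List α) :
    deconcatenation (R := R) f (l ++ m) + (l.map f).prod ⊗ₜ (m.map f).prod =
      ((l.map f).prod ⊗ₜ 1) * deconcatenation f m +
        deconcatenation f l * (1 ⊗ₜ (m.map f).prod) := by
  have hcut : splitTmul (R := R) f (l ++ m) l.length = (l.map f).prod ⊗ₜ (m.map f).prod := by
    rw [splitTmul, List.take_left, List.drop_left]
  rw [deconcatenation_mul_one_tmul, tmul_one_mul_deconcatenation,
    Finset.sum_range_succ _ l.length, hcut, deconcatenation, List.length_append, add_assoc,
    Finset.sum_range_add]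
  abel

end Deconcatenation

theorem TensorAlgebra.span_range_prod_map_ι (R M : Type*) [CommSemiring R] [AddCommMonoid M]
    [Module R M] :
    Submodule.span R (Set.range fun l : List M => (l.map (ι R)).prod) = ⊤ := by
  refine eq_top_iff.2 fun x _ => ?_
  have hx : x ∈ Subalgebra.toSubmodule (Algebra.adjoin R (Set.range (ι R (M := M)))) := by
    simp [adjoin_range_ι]
  rw [Algebra.adjoin_eq_span] at hx
  refine Submodule.span_mono (fun y hy => ?_) hx
  induction hy using Submonoid.closure_induction with
  | mem _ hv => obtain ⟨v, rfl⟩ := hv; exact ⟨[v], by simp⟩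
  | one => exact ⟨[], rfl⟩
  | mul _ _ _ _ hl hm =>
    obtain ⟨l, rfl⟩ := hl
    obtain ⟨m, rfl⟩ := hm
    exact ⟨l ++ m, by simp⟩

theorem map_mul_add_tmul_of_span_eq_top {R A : Type*} [CommSemiring R] [Semiring A]
    [Algebra R A] (Δ : A →ₗ[R] A ⊗[R] A) {s : Set A} (hs : Submodule.span R s = ⊤)
    (h : ∀ a ∈ s, ∀ b ∈ s, Δ (a * b) + a ⊗ₜ b = (a ⊗ₜ 1) * Δ b + Δ a * (1 ⊗ₜ b)) (a b : A) :
    Δ (a * b) + a ⊗ₜ b = (a ⊗ₜ 1) * Δ b + Δ a * (1 ⊗ₜ b) := by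
  let mulTensor := LinearMap.mul R (A ⊗[R] A)
  have hbilin : (LinearMap.mul R A).compr₂ Δ + TensorProduct.mk R A A =
      mulTensor.compl₁₂ ((TensorProduct.mk R A A).flip 1) Δ +
        mulTensor.compl₁₂ Δ (TensorProduct.mk R A A 1) :=
    LinearMap.ext_on hs fun a ha => LinearMap.ext_on hs fun b hb => h a ha b hb
  exact congr($hbilin a b)

/-- The tensor algebra T(V) with concatenation product and deconcatenation coproduct
satisfies the unital infinitesimal relation. -/
theorem stmt_19 (K : Type*) [Field K] (V : Type*) [AddCommGroup V] [Module K V]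
    (Δ : TensorAlgebra K V →ₗ[K] TensorAlgebra K V ⊗[K] TensorAlgebra K V)
    (hΔ : ∀ l : List V,
      Δ (l.map (TensorAlgebra.ι K)).prod =
        ∑ i ∈ Finset.range (l.length + 1),
          ((l.take i).map (TensorAlgebra.ι K)).prod ⊗ₜ[K]
            ((l.drop i).map (TensorAlgebra.ι K)).prod) :
    ∀ a b : TensorAlgebra K V,
      Δ (a * b) = (a ⊗ₜ[K] 1) * Δ b + Δ a * (1 ⊗ₜ[K] b) - a ⊗ₜ[K] b := by
  intro a b
  refine eq_sub_of_add_eq (map_mul_add_tmul_of_span_eq_top Δ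
    (TensorAlgebra.span_range_prod_map_ι K V) ?_ a b)
  rintro _ ⟨l, rfl⟩ _ ⟨m, rfl⟩
  rw [← List.prod_append, ← List.map_append, hΔ, hΔ, hΔ]
  exact deconcatenation_append_add_tmul _ l m
end
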